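/- arXiv:1708.00717 — 2 statements merged into one kernel-verified Lean document; each statement's English description precedes it below -/
import Mathlib

section
/- Let v₀ = 0, v_i = ϖ_i/n_i (1 ≤ i ≤ l) be the vertices of the fundamental alcove, let i ∈ J (so n_i = 1), let w₀ be the longest element of W and w_i the longest element of the parabolic subgroup of W generated by the simple reflections s_j for j ≠ i. Let σ_i be the permutation of {0,1,...,l} determined by τ(ϖ_i)∘w_i∘w₀(v_k) = v_{σ_i(k)} for all k. Then sign(σ_i) = (−1)^{ℓ(w_i w₀)}. -/
/-!
In homogeneous coordinates the affine map `x ↦ g x + ϖ_i`, `g = ρ (w_i w₀)`, becomes the linear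
map `(t, x) ↦ (t, g x + t • ϖ_i)` of `ℝ × V`. The vectors `(1, v_k)` form a basis of `ℝ × V`
because the vertices of the alcove are affinely independent, and this map permutes them by `σ_i`,
so its determinant is `sign σ_i`. On the other hand it is block triangular with diagonal blocks
`1` and `g`, so its determinant is `det g`, which is `(-1)^ℓ(w_i w₀)` because every simple
reflection has determinant `-1`.
-/

open Module

section RankOnePerturbation

variable {R M : Type*} [CommRing R] [AddCommGroup M] [Module R M] [Module.Free R M]
  [Module.Finite R M]

theorem LinearMap.det_one_add_smulRight (f : Dual R M) (x : M) :
    LinearMap.det (1 + f.smulRight x) = 1 + f x := by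
  classical
  set b := Module.Free.chooseBasis R M
  rw [← det_toMatrix b, map_add, toMatrix_one, toMatrix_smulRight, Matrix.vecMulVec_eq Unit,
    Matrix.det_one_add_mul_comm, Matrix.det_unique, Matrix.add_apply, Matrix.one_apply_eq,
    Matrix.replicateRow_mul_replicateCol_apply]
  conv_rhs => rw [← b.sum_repr x]
  simp only [dotProduct, Function.comp_apply, map_sum, map_smul, smul_eq_mul, mul_comm]

theorem Module.det_reflection {f : Dual R M} {x : M} (h : f x = 2) :
    LinearMap.det (reflection h).toLinearMap = -1 := by
  have : (reflection h).toLinearMap = 1 + (-f).smulRight x := by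
    ext y
    simp [reflection_apply, sub_eq_add_neg]
  rw [this, LinearMap.det_one_add_smulRight]
  norm_num [h]

end RankOnePerturbation

theorem CoxeterSystem.map_eq_neg_one_pow_length {B W M : Type*} [Group W] [Monoid M]
    [HasDistribNeg M] {Mat : CoxeterMatrix B} (cs : CoxeterSystem Mat W) (χ : W →* M)
    (h : ∀ i, χ (cs.simple i) = -1) (w : W) : χ w = (-1) ^ cs.length w := by
  obtain ⟨ω, hω, rfl⟩ := cs.exists_isReduced w
  rw [hω.eq]
  clear hω
  induction ω with
  | nil => simp
  | cons i ω ih => rw [cs.wordProd_cons, map_mul, h, ih, List.length_cons, pow_succ', neg_one_mul]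

section Homogenization

variable {R V : Type*} [CommRing R] [AddCommGroup V] [Module R V]

def homogenization (g : V →ₗ[R] V) (a : V) : R × V →ₗ[R] R × V :=
  (LinearMap.fst R R V).prod (g ∘ₗ LinearMap.snd R R V + (LinearMap.fst R R V).smulRight a)

@[simp]
theorem homogenization_apply (g : V →ₗ[R] V) (a : V) (t : R) (x : V) :
    homogenization g a (t, x) = (t, g x + t • a) :=
  rfl

theorem det_homogenization [Free R V] [Module.Finite R V] (g : V →ₗ[R] V) (a : V) :
    LinearMap.det (homogenization g a) = LinearMap.det g := by
  have : homogenization g a =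
      (1 + (LinearMap.fst R R V).smulRight (0, a)) ∘ₗ LinearMap.prodMap LinearMap.id g := by
    ext <;> simp
  rw [this, LinearMap.det_comp, LinearMap.det_one_add_smulRight, LinearMap.det_prodMap,
    LinearMap.det_id]
  simp

end Homogenization

theorem LinearMap.det_eq_sign_of_apply_basis {R M ι : Type*} [CommRing R] [AddCommGroup M]
    [Module R M] [Fintype ι] [DecidableEq ι] (b : Basis ι R M) (f : M →ₗ[R] M)
    (σ : Equiv.Perm ι) (h : ∀ i, f (b i) = b (σ i)) :
    LinearMap.det f = Equiv.Perm.sign σ := by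
  have : toMatrix b b f = (σ.permMatrix R).transpose := by
    ext i j
    simp [toMatrix_apply, h, Finsupp.single_apply, Equiv.Perm.permMatrix, PEquiv.toMatrix_apply]
  rw [← det_toMatrix b, this, Matrix.det_transpose, Matrix.det_permutation]

theorem AffineIndependent.linearIndependent_one_prod {k V ι : Type*} [Ring k] [AddCommGroup V]
    [Module k V] {p : ι → V} (hp : AffineIndependent k p) :
    LinearIndependent k (fun i => ((1 : k), p i)) := by
  rw [linearIndependent_iff']
  intro s w hw i hi
  have h1 := congrArg Prod.fst hw
  have h2 := congrArg Prod.snd hw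
  simp only [Prod.fst_sum, Prod.snd_sum, Prod.smul_fst, Prod.smul_snd, smul_eq_mul, mul_one,
    Prod.fst_zero, Prod.snd_zero] at h1 h2
  exact hp.eq_zero_of_sum_eq_zero h1 h2 i hi

theorem det_eq_sign_of_affineIndependent {k V ι : Type*} [Field k] [AddCommGroup V] [Module k V]
    [FiniteDimensional k V] [Fintype ι] [DecidableEq ι] {p : ι → V} (hp : AffineIndependent k p)
    (hcard : Fintype.card ι = finrank k V + 1) (g : V →ₗ[k] V) (a : V) (σ : Equiv.Perm ι)
    (h : ∀ j, g (p j) + a = p (σ j)) :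
    LinearMap.det g = Equiv.Perm.sign σ := by
  let u := basisOfLinearIndependentOfCardEqFinrank' _ hp.linearIndependent_one_prod
    (by simp [hcard, add_comm])
  rw [← det_homogenization g a]
  exact LinearMap.det_eq_sign_of_apply_basis u _ σ fun j => by simp [u, h]

theorem affineIndependent_of_linearIndependent_succ {k V : Type*} [Ring k] [AddCommGroup V]
    [Module k V] {l : ℕ} {p : Fin (l + 1) → V} (h0 : p 0 = 0)
    (h : LinearIndependent k (fun j : Fin l => p j.succ)) : AffineIndependent k p := by
  rw [affineIndependent_iff_linearIndependent_vsub k p 0,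
    ← linearIndependent_equiv (finSuccAboveEquiv 0)]
  simpa [h0, Function.comp_def, finSuccAboveEquiv_apply] using h

theorem sign_sigma_eq_neg_one_pow_length_general
    {V : Type*} [AddCommGroup V] [Module ℝ V] {l : ℕ}
    (α : Fin l → Module.Dual ℝ V) (ϖ : Module.Basis (Fin l) ℝ V)
    (n : Fin l → ℕ) (hn : ∀ k, 1 ≤ n k)
    -- the Weyl group `W`, acting on `V` with the simple reflections acting as
    -- the orthogonal reflections `s_{α_k}` (with respect to coroots `c k`):
    (Mat : CoxeterMatrix (Fin l)) {W : Type*} [Group W] (cs : CoxeterSystem Mat W)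
    (ρ : W →* (V ≃ₗ[ℝ] V)) (c : Fin l → V) (h2 : ∀ k, α k (c k) = 2)
    (hρ : ∀ k, ρ (cs.simple k) = Module.reflection (h2 k))
    -- the vertices of the fundamental alcove:
    (v : Fin (l + 1) → V) (hv0 : v 0 = 0)
    (hv : ∀ k : Fin l, v k.succ = ((n k : ℝ))⁻¹ • ϖ k)
    -- `i ∈ J`, the longest elements `w₀` and `w_i`:
    (i : Fin l)
    (w0 : W)
    (wi : W)
    -- the permutation `σ_i` of the vertices induced by `τ(ϖ_i) ∘ w_i ∘ w₀`:
    (σ : Equiv.Perm (Fin (l + 1)))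
    (hσ : ∀ k, ρ (wi * w0) (v k) + ϖ i = v (σ k)) :
    Equiv.Perm.sign σ = (-1 : ℤˣ) ^ (cs.length (wi * w0)) := by
  have : FiniteDimensional ℝ V := Module.Finite.of_basis ϖ
  have hunit : ∀ k, IsUnit ((n k : ℝ))⁻¹ := fun k => by
    simpa [Nat.one_le_iff_ne_zero] using hn k
  have hv_indep : AffineIndependent ℝ v := by
    refine affineIndependent_of_linearIndependent_succ hv0 ?_
    have hsucc : (fun k : Fin l => v k.succ) = ϖ.isUnitSMul hunit :=
      funext fun k => by rw [hv, Basis.isUnitSMul_apply]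
    exact hsucc ▸ (ϖ.isUnitSMul hunit).linearIndependent
  have hdet_sign := det_eq_sign_of_affineIndependent hv_indep
    (by simp [finrank_eq_card_basis ϖ]) (ρ (wi * w0)).toLinearMap (ϖ i) σ hσ
  have hdet_length : LinearMap.det (ρ (wi * w0)).toLinearMap = (-1) ^ cs.length (wi * w0) :=
    cs.map_eq_neg_one_pow_length
      (LinearMap.det.comp (LinearEquiv.automorphismGroup.toLinearMapMonoidHom.comp ρ))
      (fun k => by simp [hρ, Module.det_reflection]) _
  exact Units.ext (Int.cast_injective (α := ℝ) (by push_cast; rw [← hdet_sign, hdet_length]))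

/-- Lemma `tec`: Let `v₀ = 0`, `v_k = ϖ_k / n_k` (`1 ≤ k ≤ l`) be the
vertices of the fundamental alcove of a reduced irreducible root system of rank `l`
(simple roots `α_k`, fundamental coweights `ϖ_k` forming a basis of `V`, highest-root
coefficients `n_k`).  Let `i ∈ J` (i.e. `n_i = 1`), let `w₀` be the longest element of
the Weyl group `W` and `w_i` the longest element of the standard parabolic subgroup of
`W` generated by the simple reflections `s_j`, `j ≠ i`.  If `σ_i` is the permutation of
`{0, 1, …, l}` determined by `τ(ϖ_i) ∘ w_i ∘ w₀ (v_k) = v_{σ_i(k)}` for all `k`, then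
`sign(σ_i) = (−1)^{ℓ(w_i w₀)}`. -/
theorem sign_sigma_eq_neg_one_pow_length
    {V : Type*} [AddCommGroup V] [Module ℝ V] {l : ℕ}
    (α : Fin l → Module.Dual ℝ V) (ϖ : Module.Basis (Fin l) ℝ V)
    (hdual : ∀ k j, α j (ϖ k) = if k = j then 1 else 0)
    (n : Fin l → ℕ) (hn : ∀ k, 1 ≤ n k)
    -- the Weyl group `W`, acting on `V` with the simple reflections acting as
    -- the orthogonal reflections `s_{α_k}` (with respect to coroots `c k`):
    (Mat : CoxeterMatrix (Fin l)) {W : Type*} [Group W] (cs : CoxeterSystem Mat W)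
    (ρ : W →* (V ≃ₗ[ℝ] V)) (c : Fin l → V) (h2 : ∀ k, α k (c k) = 2)
    (hρ : ∀ k, ρ (cs.simple k) = Module.reflection (h2 k))
    -- the vertices of the fundamental alcove:
    (v : Fin (l + 1) → V) (hv0 : v 0 = 0)
    (hv : ∀ k : Fin l, v k.succ = ((n k : ℝ))⁻¹ • ϖ k)
    -- `i ∈ J`, the longest elements `w₀` and `w_i`:
    (i : Fin l) (hi : n i = 1)
    (w0 : W) (hw0 : ∀ w, cs.length w ≤ cs.length w0)
    (wi : W) (hwiMem : wi ∈ Subgroup.closure (cs.simple '' {j | j ≠ i}))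
    (hwi : ∀ w ∈ Subgroup.closure (cs.simple '' {j | j ≠ i}),
      cs.length w ≤ cs.length wi)
    -- the permutation `σ_i` of the vertices induced by `τ(ϖ_i) ∘ w_i ∘ w₀`:
    (σ : Equiv.Perm (Fin (l + 1)))
    (hσ : ∀ k, ρ (wi * w0) (v k) + ϖ i = v (σ k)) :
    Equiv.Perm.sign σ = (-1 : ℤˣ) ^ (cs.length (wi * w0)) :=
  sign_sigma_eq_neg_one_pow_length_general α ϖ n hn Mat cs ρ c h2 hρ v hv0 hv i w0 wi σ hσ
end

section
/- Suppose σ is a permutation of {0,1,...,l}, v₁,...,v_l is a basis of an l-dimensional real vector space V, v₀ = 0, and u is a linear automorphism of V such that u(v_k) = v_{σ(k)} − v_i for all k ∈ {0,...,l}, where i = σ(0). Then det(u) = sign(σ). -/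
/-! The matrix of `u` in the basis `b` has columns `v_{σ(k)} - v_{σ(0)}`, `1 ≤ k ≤ l`.
For points `w_0, …, w_l`, the determinant of `w_1 - w_0, …, w_l - w_0` equals that of the
`(l+1) × (l+1)` matrix whose columns are the homogeneous coordinates `(1, w_k)`: row operations
translate `w_0` to the origin, and expanding along the first column leaves the former.
Permuting the points permutes the columns, so it multiplies this determinant by `sign σ`;
for `w = v` it is `det b = 1`. -/

open Matrix Equiv

namespace Matrix

variable {R : Type*} [CommRing R] {n : ℕ}

def homogeneousCoordMatrix (c : Fin (n + 1) → Fin n → R) : Matrix (Fin (n + 1)) (Fin (n + 1)) R :=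
  of fun i j => (Fin.cons 1 (c j) : Fin (n + 1) → R) i

theorem det_homogeneousCoordMatrix_sub_const (c : Fin (n + 1) → Fin n → R) (x : Fin n → R) :
    det (homogeneousCoordMatrix fun j => c j - x) = det (homogeneousCoordMatrix c) := by
  refine (det_eq_of_forall_row_eq_smul_add_const (Fin.cons 0 x) 0 rfl fun i j => ?_).symm
  cases i using Fin.cases <;> simp [homogeneousCoordMatrix]

theorem det_homogeneousCoordMatrix_of_eq_zero {c : Fin (n + 1) → Fin n → R} (hc : c 0 = 0) :
    det (homogeneousCoordMatrix c) = det (of fun m k => c k.succ m) := by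
  rw [det_succ_column_zero, Fin.sum_univ_succ]
  simp only [homogeneousCoordMatrix, of_apply, hc, Fin.val_zero, pow_zero, Fin.cons_zero,
    Fin.cons_succ, Fin.succAbove_zero, Pi.zero_apply, mul_one, one_mul, mul_zero, zero_mul,
    Finset.sum_const_zero, add_zero]
  rfl

theorem det_homogeneousCoordMatrix_comp_perm (c : Fin (n + 1) → Fin n → R)
    (σ : Perm (Fin (n + 1))) :
    det (homogeneousCoordMatrix (c ∘ σ)) = Perm.sign σ * det (homogeneousCoordMatrix c) :=
  det_permute' σ (homogeneousCoordMatrix c)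

end Matrix

namespace Module.Basis

variable {R M : Type*} [CommRing R] [AddCommGroup M] [Module R M] {n : ℕ}

theorem det_sub_vertex_eq_det_homogeneousCoordMatrix (b : Basis (Fin n) R M)
    (w : Fin (n + 1) → M) :
    b.det (fun k => w k.succ - w 0) = (homogeneousCoordMatrix fun j => ⇑(b.repr (w j))).det := by
  rw [← det_homogeneousCoordMatrix_sub_const _ (b.repr (w 0)),
    det_homogeneousCoordMatrix_of_eq_zero (sub_self _), b.det_apply]
  congr 1
  ext m k
  simp [toMatrix_apply]

theorem det_sub_vertex_comp_perm (b : Basis (Fin n) R M) (w : Fin (n + 1) → M)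
    (σ : Perm (Fin (n + 1))) :
    b.det (fun k => w (σ k.succ) - w (σ 0)) = Perm.sign σ * b.det (fun k => w k.succ - w 0) :=
  calc b.det (fun k => w (σ k.succ) - w (σ 0))
      = (homogeneousCoordMatrix ((fun j => ⇑(b.repr (w j))) ∘ σ)).det :=
        b.det_sub_vertex_eq_det_homogeneousCoordMatrix (w ∘ σ)
    _ = Perm.sign σ * b.det (fun k => w k.succ - w 0) := by
      rw [det_homogeneousCoordMatrix_comp_perm, det_sub_vertex_eq_det_homogeneousCoordMatrix]

end Module.Basis

/-- Let `σ` be a permutation of `{0, 1, …, l}`, let `v₁, …, v_l` be a basis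
of an `l`-dimensional real vector space `V`, set `v₀ = 0`, and let `u` be a linear
automorphism of `V` such that `u(v_k) = v_{σ(k)} − v_i` for all `k ∈ {0, …, l}`, where
`i = σ(0)`.  Then `det(u) = sign(σ)`. -/
theorem det_eq_sign_of_perm_vertices
    {V : Type*} [AddCommGroup V] [Module ℝ V] {l : ℕ}
    (σ : Equiv.Perm (Fin (l + 1)))
    (b : Module.Basis (Fin l) ℝ V)
    (v : Fin (l + 1) → V) (hv0 : v 0 = 0) (hv : ∀ k : Fin l, v k.succ = b k)
    (u : V ≃ₗ[ℝ] V)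
    (hu : ∀ k : Fin (l + 1), u (v k) = v (σ k) - v (σ 0)) :
    LinearMap.det (u.toLinearMap) = ((Equiv.Perm.sign σ : ℤ) : ℝ) := by
  have hvb : (fun k => v k.succ - v 0) = b := by
    funext k
    rw [hv0, sub_zero, hv]
  calc LinearMap.det (u.toLinearMap)
      = b.det ((u : V →ₗ[ℝ] V) ∘ b) := by rw [b.det_comp, b.det_self, mul_one]
    _ = b.det (fun k => v (σ k.succ) - v (σ 0)) := by
      congr 1
      funext k
      rw [Function.comp_apply, ← hv, LinearEquiv.coe_coe, hu]
    _ = Perm.sign σ * b.det (fun k => v k.succ - v 0) := b.det_sub_vertex_comp_perm v σ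
    _ = ((Equiv.Perm.sign σ : ℤ) : ℝ) := by rw [hvb, b.det_self, mul_one]
end
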